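/- Let A₁ →(p₁) Ā₁ → B ← Ā₂ ←(p₂) A₂ be ring homomorphisms where p₁ and p₂ are surjective with kernels I₁ and I₂ respectively. Then there is a ring isomorphism Ā₁ ×_B Ā₂ ≅ (A₁ ×_B A₂)/(I₁, I₂), where A₁ → B and A₂ → B are the composite homomorphisms, and (I₁, I₂) denotes the ideal of A₁ ×_B A₂ generated by the elements (i₁, 0) with i₁ ∈ I₁ and (0, i₂) with i₂ ∈ I₂ (note that these elements lie in the fiber product since I₁ and I₂ map to 0 in B). -/

import Mathlib

/-!
The map `(a₁, a₂) ↦ (p₁ a₁, p₂ a₂)` sends `A₁ ×_B A₂` onto `Ā₁ ×_B Ā₂`: lift the two coordinates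
separately, and the lift still lies in the fiber product because `A_i → B` factors through `p_i`.
An element `(a₁, a₂)` of its kernel has `p₁ a₁ = 0 = p₂ a₂`, so `(a₁, 0)` and `(0, a₂)` lie in the
fiber product and `(a₁, a₂) = (a₁, 0) + (0, a₂)` lies in `(I₁, I₂)`. The first isomorphism
theorem concludes.
-/

/-- The fiber product `A ×_D C` of two ring homomorphisms `p : A → D`, `q : C → D`:
the subring of `A × C` consisting of pairs `(x, c)` with `p x = q c`. -/
def ringFiberProduct {A C D : Type*} [CommRing A] [CommRing C] [CommRing D]
    (p : A →+* D) (q : C →+* D) : Subring (A × C) :=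
  RingHom.eqLocus (p.comp (RingHom.fst A C)) (q.comp (RingHom.snd A C))

section RingFiberProductMap

variable {A₁ A₂ B Abar₁ Abar₂ : Type*} [CommRing A₁] [CommRing A₂] [CommRing B]
  [CommRing Abar₁] [CommRing Abar₂]
  (p₁ : A₁ →+* Abar₁) (p₂ : A₂ →+* Abar₂) (f₁ : Abar₁ →+* B) (f₂ : Abar₂ →+* B)

def ringFiberProductMap :
    ringFiberProduct (f₁.comp p₁) (f₂.comp p₂) →+* ringFiberProduct f₁ f₂ :=
  ((p₁.prodMap p₂).comp (SubringClass.subtype _)).codRestrict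
    (ringFiberProduct f₁ f₂).toSubsemiring fun x => x.2

@[simp]
theorem coe_ringFiberProductMap (x : ringFiberProduct (f₁.comp p₁) (f₂.comp p₂)) :
    (ringFiberProductMap p₁ p₂ f₁ f₂ x : Abar₁ × Abar₂) =
      (p₁ (x : A₁ × A₂).1, p₂ (x : A₁ × A₂).2) :=
  rfl

theorem ringFiberProductMap_surjective (hp₁ : Function.Surjective p₁)
    (hp₂ : Function.Surjective p₂) : Function.Surjective (ringFiberProductMap p₁ p₂ f₁ f₂) := by
  rintro ⟨⟨b₁, b₂⟩, hb⟩
  obtain ⟨a₁, rfl⟩ := hp₁ b₁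
  obtain ⟨a₂, rfl⟩ := hp₂ b₂
  exact ⟨⟨(a₁, a₂), hb⟩, rfl⟩

theorem ker_ringFiberProductMap :
    RingHom.ker (ringFiberProductMap p₁ p₂ f₁ f₂) = Ideal.span
      {x : ringFiberProduct (f₁.comp p₁) (f₂.comp p₂) |
        ((x : A₁ × A₂).1 ∈ RingHom.ker p₁ ∧ (x : A₁ × A₂).2 = 0) ∨
        ((x : A₁ × A₂).1 = 0 ∧ (x : A₁ × A₂).2 ∈ RingHom.ker p₂)} := by
  apply le_antisymm
  · rintro ⟨⟨a₁, a₂⟩, hx⟩ hker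
    have hker' : p₁ a₁ = 0 ∧ p₂ a₂ = 0 := Prod.ext_iff.mp (congrArg Subtype.val hker)
    have hmem₁ : (a₁, (0 : A₂)) ∈ ringFiberProduct (f₁.comp p₁) (f₂.comp p₂) := by
      change f₁ (p₁ a₁) = f₂ (p₂ 0)
      simp [hker'.1]
    have hmem₂ : ((0 : A₁), a₂) ∈ ringFiberProduct (f₁.comp p₁) (f₂.comp p₂) := by
      change f₁ (p₁ 0) = f₂ (p₂ a₂)
      simp [hker'.2]
    have hsplit : (⟨(a₁, a₂), hx⟩ : ringFiberProduct (f₁.comp p₁) (f₂.comp p₂)) =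
        ⟨(a₁, 0), hmem₁⟩ + ⟨(0, a₂), hmem₂⟩ :=
      Subtype.ext (Prod.ext (add_zero a₁).symm (zero_add a₂).symm)
    rw [hsplit]
    exact add_mem (Ideal.subset_span (Or.inl ⟨hker'.1, rfl⟩))
      (Ideal.subset_span (Or.inr ⟨rfl, hker'.2⟩))
  · rw [Ideal.span_le]
    rintro x (⟨h₁, h₂⟩ | ⟨h₁, h₂⟩) <;>
      exact Subtype.ext (Prod.ext (by simp_all) (by simp_all))

end RingFiberProductMap

theorem fiber_product_of_quotients
    {A₁ A₂ B Abar₁ Abar₂ : Type*} [CommRing A₁] [CommRing A₂] [CommRing B]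
    [CommRing Abar₁] [CommRing Abar₂]
    (p₁ : A₁ →+* Abar₁) (p₂ : A₂ →+* Abar₂) (f₁ : Abar₁ →+* B) (f₂ : Abar₂ →+* B)
    (hp₁ : Function.Surjective p₁) (hp₂ : Function.Surjective p₂)
    (J : Ideal (ringFiberProduct (f₁.comp p₁) (f₂.comp p₂)))
    (hJ : J = Ideal.span
      {x : ringFiberProduct (f₁.comp p₁) (f₂.comp p₂) |
        ((x : A₁ × A₂).1 ∈ RingHom.ker p₁ ∧ (x : A₁ × A₂).2 = 0) ∨
        ((x : A₁ × A₂).1 = 0 ∧ (x : A₁ × A₂).2 ∈ RingHom.ker p₂)}) :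
    ∃ e : (ringFiberProduct (f₁.comp p₁) (f₂.comp p₂) ⧸ J) ≃+* ringFiberProduct f₁ f₂,
      ∀ x : ringFiberProduct (f₁.comp p₁) (f₂.comp p₂),
        (e (Ideal.Quotient.mk J x) : Abar₁ × Abar₂) =
          (p₁ (x : A₁ × A₂).1, p₂ (x : A₁ × A₂).2) := by
  have hker : J = RingHom.ker (ringFiberProductMap p₁ p₂ f₁ f₂) := by
    rw [hJ, ker_ringFiberProductMap]
  exact ⟨(Ideal.quotEquivOfEq hker).trans
    (RingHom.quotientKerEquivOfSurjective (ringFiberProductMap_surjective p₁ p₂ f₁ f₂ hp₁ hp₂)),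
    coe_ringFiberProductMap p₁ p₂ f₁ f₂⟩
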